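/- arXiv:2402.01342 — 2 statements merged into one kernel-verified Lean document; each statement's English description precedes it below -/
import Mathlib

section
/- Fix vectors v, v' ∈ ℝ^h, matrices U, U' ∈ ℝ^{h×d}, x ∈ ℝ^d, and α₀ ∈ (0,1) such that every coordinate of g_{α₀}(x) is nonzero. Then α ↦ z_x(α) is twice differentiable at α₀ and its second derivative there equals 2(v−v')ᵀ(1_{g_{α₀}(x)>0} ⊙ (U−U')x); in particular the term involving the second derivative of the activation vanishes. -/
open MeasureTheory ProbabilityTheory Real Finset

/-- Elementwise ReLU. -/
noncomputable def relu (t : ℝ) : ℝ := max t 0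

/-- The pointwise interpolation gap
`z_x(α) = (αv+(1−α)v')ᵀσ((αU+(1−α)U')x) − α vᵀσ(Ux) − (1−α) v'ᵀσ(U'x)`. -/
noncomputable def zfun {h d : ℕ} (v v' : Fin h → ℝ) (U U' : Fin h → Fin d → ℝ)
    (x : EuclideanSpace ℝ (Fin d)) (α : ℝ) : ℝ :=
  (∑ i, (α * v i + (1 - α) * v' i) *
      relu (∑ j, (α * U i j + (1 - α) * U' i j) * x j))
    - α * ∑ i, v i * relu (∑ j, U i j * x j)
    - (1 - α) * ∑ i, v' i * relu (∑ j, U' i j * x j)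

/-- The second-derivative expression `S_x(α) = 2(v−v')ᵀ(1_{g_α(x)>0} ⊙ (U−U')x)`. -/
noncomputable def Sfun {h d : ℕ} (v v' : Fin h → ℝ) (U U' : Fin h → Fin d → ℝ)
    (x : EuclideanSpace ℝ (Fin d)) (α : ℝ) : ℝ :=
  2 * ∑ i, (v i - v' i) *
      ((if 0 < ∑ j, (α * U i j + (1 - α) * U' i j) * x j then (1 : ℝ) else 0) *
        ∑ j, (U i j - U' i j) * x j)

/-!
Away from the kink of the ReLU each preactivation `g_α(x)_i` keeps the sign it has at `α₀`,
so near `α₀` we have `σ(g_α(x)) = s ⊙ g_α(x)` for the constant mask `s = 1_{g_{α₀}(x) > 0}`.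
Both `αv + (1−α)v'` and `g_α(x)` are affine in `α`, so `z_x` coincides near `α₀` with a
quadratic polynomial whose leading coefficient is `(v−v')ᵀ(s ⊙ (U−U')x)`; the second derivative
is twice that coefficient.
-/

open Filter Topology

lemma relu_eventuallyEq_mask_mul {t₀ : ℝ} (h : t₀ ≠ 0) :
    relu =ᶠ[𝓝 t₀] fun t => (if 0 < t₀ then 1 else 0) * t := by
  rcases h.lt_or_gt with hneg | hpos
  · filter_upwards [Iio_mem_nhds hneg] with t ht
    simp [relu, max_eq_right (Set.mem_Iio.1 ht).le, not_lt.2 hneg.le]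
  · filter_upwards [Ioi_mem_nhds hpos] with t ht
    simp [relu, max_eq_left (Set.mem_Ioi.1 ht).le, hpos]

lemma sum_interpolate_mul {ι : Type*} (s : Finset ι) (u u' w : ι → ℝ) (α : ℝ) :
    ∑ j ∈ s, (α * u j + (1 - α) * u' j) * w j
      = ∑ j ∈ s, u' j * w j + α * ∑ j ∈ s, (u j - u' j) * w j := by
  rw [Finset.mul_sum, ← Finset.sum_add_distrib]
  exact Finset.sum_congr rfl fun j _ => by ring

lemma differentiableAt_and_hasDerivAt_deriv_of_eventuallyEq_quadratic {f : ℝ → ℝ} {t₀ A B C : ℝ}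
    (hf : f =ᶠ[𝓝 t₀] fun t => A * t ^ 2 + B * t + C) :
    DifferentiableAt ℝ f t₀ ∧ HasDerivAt (deriv f) (2 * A) t₀ := by
  have hq : ∀ t, HasDerivAt (fun t => A * t ^ 2 + B * t + C) (2 * A * t + B) t := fun t => by
    simpa [mul_comm, mul_left_comm, mul_assoc] using
      (((hasDerivAt_pow 2 t).const_mul A).add ((hasDerivAt_id t).const_mul B)).add_const C
  have hderiv : deriv f =ᶠ[𝓝 t₀] fun t => 2 * A * t + B := by
    filter_upwards [hf.eventuallyEq_nhds] with t ht
    exact ht.deriv_eq.trans (hq t).deriv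
  refine ⟨(hq t₀).differentiableAt.congr_of_eventuallyEq hf, ?_⟩
  refine HasDerivAt.congr_of_eventuallyEq ?_ hderiv
  simpa using ((hasDerivAt_id t₀).const_mul (2 * A)).add_const B

lemma zfun_eventuallyEq_quadratic {h d : ℕ} (v v' : Fin h → ℝ) (U U' : Fin h → Fin d → ℝ)
    (x : EuclideanSpace ℝ (Fin d)) {α₀ : ℝ}
    (hg : ∀ i, (∑ j, (α₀ * U i j + (1 - α₀) * U' i j) * x j) ≠ 0) :
    ∃ B C : ℝ, (fun α => zfun v v' U U' x α) =ᶠ[𝓝 α₀] fun α =>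
      (∑ i, (v i - v' i) *
        ((if 0 < ∑ j, (α₀ * U i j + (1 - α₀) * U' i j) * x j then (1 : ℝ) else 0) *
          ∑ j, (U i j - U' i j) * x j)) * α ^ 2 + B * α + C := by
  set s : Fin h → ℝ := fun i =>
    if 0 < ∑ j, (α₀ * U i j + (1 - α₀) * U' i j) * x j then 1 else 0
  set b : Fin h → ℝ := fun i => ∑ j, U' i j * x j
  set e : Fin h → ℝ := fun i => ∑ j, (U i j - U' i j) * x j
  set cU : ℝ := ∑ i, v i * relu (∑ j, U i j * x j)
  set cU' : ℝ := ∑ i, v' i * relu (b i)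
  have hrelu : ∀ᶠ α in 𝓝 α₀, ∀ i,
      relu (∑ j, (α * U i j + (1 - α) * U' i j) * x j)
        = s i * ∑ j, (α * U i j + (1 - α) * U' i j) * x j := by
    refine eventually_all.2 fun i => ?_
    have hcont : ContinuousAt (fun α => ∑ j, (α * U i j + (1 - α) * U' i j) * x j) α₀ := by
      fun_prop
    exact (relu_eventuallyEq_mask_mul (hg i)).comp_tendsto hcont
  show ∃ B C : ℝ, _ =ᶠ[_] fun α => (∑ i, (v i - v' i) * (s i * e i)) * α ^ 2 + B * α + C
  refine ⟨∑ i, ((v i - v' i) * (s i * b i) + v' i * (s i * e i)) - cU + cU',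
    ∑ i, v' i * (s i * b i) - cU', ?_⟩
  filter_upwards [hrelu] with α hα
  have hterm : ∀ i, (α * v i + (1 - α) * v' i) * (s i * (b i + α * e i))
      = (v i - v' i) * (s i * e i) * α ^ 2
        + ((v i - v' i) * (s i * b i) + v' i * (s i * e i)) * α + v' i * (s i * b i) :=
    fun i => by ring
  have hpre : ∀ i, ∑ j, (α * U i j + (1 - α) * U' i j) * x j = b i + α * e i := fun i =>
    sum_interpolate_mul _ _ _ _ α
  have hz : zfun v v' U U' x α
      = ∑ i, (α * v i + (1 - α) * v' i) * (s i * (b i + α * e i)) - α * cU - (1 - α) * cU' := by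
    simp only [hpre] at hα
    simp only [zfun, hpre, hα]
    rfl
  simp only [hz, hterm, Finset.sum_add_distrib, ← Finset.sum_mul]
  ring

theorem stmt4_general {h d : ℕ} (v v' : Fin h → ℝ) (U U' : Fin h → Fin d → ℝ)
    (x : EuclideanSpace ℝ (Fin d)) (α₀ : ℝ)
    (hg : ∀ i, (∑ j, (α₀ * U i j + (1 - α₀) * U' i j) * x j) ≠ 0) :
    DifferentiableAt ℝ (fun α => zfun v v' U U' x α) α₀ ∧
      HasDerivAt (deriv (fun α => zfun v v' U U' x α)) (Sfun v v' U U' x α₀) α₀ := by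
  obtain ⟨B, C, hquad⟩ := zfun_eventuallyEq_quadratic v v' U U' x hg
  exact differentiableAt_and_hasDerivAt_deriv_of_eventuallyEq_quadratic hquad

theorem stmt4 {h d : ℕ} (v v' : Fin h → ℝ) (U U' : Fin h → Fin d → ℝ)
    (x : EuclideanSpace ℝ (Fin d)) (α₀ : ℝ) (hα : α₀ ∈ Set.Ioo (0 : ℝ) 1)
    (hg : ∀ i, (∑ j, (α₀ * U i j + (1 - α₀) * U' i j) * x j) ≠ 0) :
    DifferentiableAt ℝ (fun α => zfun v v' U U' x α) α₀ ∧
      HasDerivAt (deriv (fun α => zfun v v' U U' x α)) (Sfun v v' U U' x α₀) α₀ :=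
  stmt4_general v v' U U' x α₀ hg
end

section
/- Let M_U ∈ {0,1}^{h×d} be a 0/1 matrix with z₀ zero entries, and let X = {x ∈ ℝ^d : ‖x‖₂ < b}. Then (1/vol(X)) ∫_X √(Σ_{i=1}^h ‖M_{U,i,:} ⊙ x‖₂²) dx ≤ √((h − z₀/d) · d b²/(d+2)), where M_{U,i,:} denotes the i-th row of M_U and ⊙ the entrywise product. -/
/-! By Jensen's inequality for the concave square root, the average of `√F` over the ball is at
most `√(⨍ F)`, and `⨍ F` is computed exactly: polar coordinates give `⨍ ‖x‖² = d b² / (d + 2)`,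
the coordinate permutations of the ball spread this evenly as `⨍ x_j² = b² / (d + 2)`, and for
a 0/1 matrix `∑ i, j, M_ij²` is the number `h d - z₀` of its ones. -/

open MeasureTheory Real Finset Metric Set Module

theorem Continuous.integrableOn_ball {E F : Type*} [MetricSpace E] [ProperSpace E]
    [MeasurableSpace E] [OpensMeasurableSpace E] [NormedAddCommGroup F] {μ : Measure E}
    [IsFiniteMeasureOnCompacts μ] {f : E → F} (hf : Continuous f) (x : E) (r : ℝ) :
    IntegrableOn f (ball x r) μ :=
  (hf.continuousOn.integrableOn_compact (isCompact_closedBall x r)).mono_set ball_subset_closedBall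

theorem integral_norm_sq_ball {E : Type*} [NormedAddCommGroup E] [NormedSpace ℝ E]
    [FiniteDimensional ℝ E] [Nontrivial E] [MeasurableSpace E] [BorelSpace E]
    (μ : Measure E) [μ.IsAddHaarMeasure] {b : ℝ} (hb : 0 ≤ b) :
    ∫ x in ball 0 b, ‖x‖ ^ 2 ∂μ
      = finrank ℝ E * b ^ 2 / (finrank ℝ E + 2) * μ.real (ball 0 b) := by
  set n := finrank ℝ E
  have hn : 1 ≤ n := finrank_pos
  have radial : ∫ y in Ioi (0 : ℝ), y ^ (n - 1) • (Iio b).indicator (· ^ 2) y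
      = b ^ (n + 2) / (n + 2) := by
    have hpow (y : ℝ) : y ^ (n - 1) • (Iio b).indicator (· ^ 2) y
        = (Iio b).indicator (· ^ (n + 1)) y := by
      by_cases hy : y ∈ Iio b
      · simp only [indicator_of_mem hy, smul_eq_mul, ← pow_add]
        congr 1; omega
      · simp [indicator_of_notMem hy]
    simp_rw [hpow]
    rw [integral_indicator measurableSet_Iio, Measure.restrict_restrict measurableSet_Iio,
      Iio_inter_Ioi, ← integral_Ioc_eq_integral_Ioo, ← intervalIntegral.integral_of_le hb,
      integral_pow]
    push_cast
    ring_nf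
  have to_radial :
      ∫ x in ball 0 b, ‖x‖ ^ 2 ∂μ = ∫ x, (Iio b).indicator (· ^ 2) ‖x‖ ∂μ := by
    rw [← integral_indicator measurableSet_ball]
    congr 1 with x
    simp only [indicator, mem_ball_zero_iff, Set.mem_Iio]
  rw [to_radial, integral_fun_norm_addHaar, radial, measureReal_def, measureReal_def,
    μ.addHaar_ball 0 hb, ENNReal.toReal_mul, ENNReal.toReal_ofReal (by positivity)]
  simp only [nsmul_eq_mul, smul_eq_mul, pow_add]
  ring

theorem integral_sq_apply_ball_eq {ι : Type*} [Fintype ι] (b : ℝ) (j k : ι) :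
    ∫ x in ball (0 : EuclideanSpace ℝ ι) b, x j ^ 2
      = ∫ x in ball (0 : EuclideanSpace ℝ ι) b, x k ^ 2 := by
  classical
  let e := LinearIsometryEquiv.piLpCongrLeft 2 ℝ ℝ (Equiv.swap j k)
  have he : ∀ x, e x k = x j := fun x => by
    simp [e, LinearIsometryEquiv.piLpCongrLeft_apply, Equiv.piCongrLeft'_apply]
  have hball : e ⁻¹' ball 0 b = ball 0 b := by
    ext x
    simp
  calc ∫ x in ball (0 : EuclideanSpace ℝ ι) b, x j ^ 2
      = ∫ x in e ⁻¹' ball 0 b, (e x) k ^ 2 := by simp only [he, hball]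
    _ = ∫ x in ball (0 : EuclideanSpace ℝ ι) b, x k ^ 2 :=
      e.measurePreserving.setIntegral_preimage_emb e.toHomeomorph.measurableEmbedding
        (fun x : EuclideanSpace ℝ ι => x k ^ 2) _

theorem integral_sq_apply_ball {ι : Type*} [Fintype ι] {b : ℝ} (hb : 0 ≤ b) (j : ι) :
    ∫ x in ball (0 : EuclideanSpace ℝ ι) b, x j ^ 2
      = b ^ 2 / (Fintype.card ι + 2) * volume.real (ball (0 : EuclideanSpace ℝ ι) b) := by
  have : Nonempty ι := ⟨j⟩
  have hcoord (k : ι) : Continuous fun x : EuclideanSpace ℝ ι => x k ^ 2 :=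
    (EuclideanSpace.proj k).continuous.pow 2
  have hsum : ∫ x in ball (0 : EuclideanSpace ℝ ι) b, ‖x‖ ^ 2
      = Fintype.card ι * ∫ x in ball (0 : EuclideanSpace ℝ ι) b, x j ^ 2 := by
    simp_rw [EuclideanSpace.norm_sq_eq, Real.norm_eq_abs, sq_abs]
    rw [integral_finsetSum _ fun k _ => (hcoord k).integrableOn_ball 0 b]
    simp [integral_sq_apply_ball_eq b _ j]
  have hd : (Fintype.card ι : ℝ) ≠ 0 := by positivity
  rw [integral_norm_sq_ball volume hb, finrank_euclideanSpace] at hsum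
  field_simp at hsum ⊢
  linarith

theorem setAverage_sum_mul_sq_apply_ball {ι : Type*} [Fintype ι] (c : ι → ℝ) {b : ℝ}
    (hb : 0 < b) :
    ⨍ x in ball (0 : EuclideanSpace ℝ ι) b, ∑ j, c j * x j ^ 2
      = (∑ j, c j) * (b ^ 2 / (Fintype.card ι + 2)) := by
  have hvol : 0 < volume.real (ball (0 : EuclideanSpace ℝ ι) b) :=
    ENNReal.toReal_pos (measure_ball_pos _ _ hb).ne' measure_ball_lt_top.ne
  rw [setAverage_eq, integral_finsetSum _ fun j _ =>
    (continuous_const.mul ((EuclideanSpace.proj j).continuous.pow 2)).integrableOn_ball 0 b]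
  simp_rw [integral_const_mul, integral_sq_apply_ball hb.le, ← mul_assoc, ← Finset.sum_mul,
    smul_eq_mul]
  field_simp

theorem setAverage_sqrt_le_sqrt_setAverage {α : Type*} [MeasurableSpace α] {μ : Measure α}
    {s : Set α} {f : α → ℝ} (h0 : μ s ≠ 0) (hs : μ s ≠ ⊤) (hf : ∀ x, 0 ≤ f x)
    (hfi : IntegrableOn f s μ) (hgi : IntegrableOn (fun x => √(f x)) s μ) :
    ⨍ x in s, √(f x) ∂μ ≤ √(⨍ x in s, f x ∂μ) :=
  strictConcaveOn_sqrt.concaveOn.le_map_set_average continuous_sqrt.continuousOn isClosed_Ici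
    h0 hs (Filter.Eventually.of_forall hf) hfi hgi

theorem sum_sq_eq_card_sub_card_filter_eq_zero {α : Type*} [Fintype α] {f : α → ℝ}
    (hf : ∀ a, f a = 0 ∨ f a = 1) :
    ∑ a, f a ^ 2 = Fintype.card α - #{a | f a = 0} := by
  classical
  have hsq (a : α) : f a ^ 2 = if f a = 0 then 0 else 1 := by
    rcases hf a with h | h <;> simp [h]
  rw [Fintype.sum_congr _ _ hsq, Finset.sum_ite, Finset.sum_const_zero, Finset.sum_const,
    nsmul_one, zero_add, eq_sub_iff_add_eq]
  exact_mod_cast (add_comm _ _).trans (card_filter_add_card_filter_not (s := univ) _)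

theorem stmt6_general (h d : ℕ) (hd : 1 ≤ d) (b : ℝ) (hb : 0 < b)
    (MU : Fin h → Fin d → ℝ) (hMU : ∀ i j, MU i j = 0 ∨ MU i j = 1) :
    ⨍ x in Metric.ball (0 : EuclideanSpace ℝ (Fin d)) b,
        Real.sqrt (∑ i, ∑ j, (MU i j * x j) ^ 2)
      ≤ Real.sqrt
          (((h : ℝ) - ((Finset.univ.filter fun p : Fin h × Fin d => MU p.1 p.2 = 0).card : ℝ) / d) * ((d : ℝ) * b ^ 2 / (d + 2))) := by
  set F := fun x : EuclideanSpace ℝ (Fin d) => ∑ i, ∑ j, (MU i j * x j) ^ 2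
  have hF : F = fun x => ∑ j, (∑ i, MU i j ^ 2) * x j ^ 2 := by
    funext x
    simp_rw [F, mul_pow, Finset.sum_mul]
    exact Finset.sum_comm
  have hcont : Continuous F := by fun_prop
  have hones : ∑ j, ∑ i, MU i j ^ 2
      = h * d - #{p : Fin h × Fin d | MU p.1 p.2 = 0} := by
    rw [Finset.sum_comm, ← Fintype.sum_prod_type' (fun i j => MU i j ^ 2),
      sum_sq_eq_card_sub_card_filter_eq_zero fun p => hMU p.1 p.2]
    simp
  have hd0 : (d : ℝ) ≠ 0 := by positivity
  calc ⨍ x in ball 0 b, √(F x)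
      ≤ √(⨍ x in ball 0 b, F x) :=
        setAverage_sqrt_le_sqrt_setAverage (measure_ball_pos _ _ hb).ne' measure_ball_lt_top.ne
          (fun x => by positivity) (hcont.integrableOn_ball 0 b)
          ((continuous_sqrt.comp hcont).integrableOn_ball 0 b)
    _ = √((h * d - #{p : Fin h × Fin d | MU p.1 p.2 = 0}) * (b ^ 2 / (d + 2))) := by
      rw [hF, setAverage_sum_mul_sq_apply_ball _ hb, hones, Fintype.card_fin]
    _ = _ := by
      congr 1
      field_simp

theorem stmt6 (h d : ℕ) (hh : 1 ≤ h) (hd : 1 ≤ d) (b : ℝ) (hb : 0 < b)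
    (MU : Fin h → Fin d → ℝ) (hMU : ∀ i j, MU i j = 0 ∨ MU i j = 1) :
    ⨍ x in Metric.ball (0 : EuclideanSpace ℝ (Fin d)) b,
        Real.sqrt (∑ i, ∑ j, (MU i j * x j) ^ 2)
      ≤ Real.sqrt
          (((h : ℝ) - ((Finset.univ.filter fun p : Fin h × Fin d => MU p.1 p.2 = 0).card : ℝ) / d) * ((d : ℝ) * b ^ 2 / (d + 2))) :=
  stmt6_general h d hd b hb MU hMU
end
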